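/- arXiv:1911.04079 — 2 statements merged into one kernel-verified Lean document; each statement's English description precedes it below -/
import Mathlib

section
/- Let N = {1,…,2n} carry a coloring with exactly n black and n white nodes, let b_1 < ⋯ < b_n be the black nodes and w_1 < ⋯ < w_n the white nodes, and for a black node b and white node w set τ(b,w) = (−1)^{[b > w]} · sign(b,w) ∈ {1, −1}, where [b > w] equals 1 if b > w and 0 otherwise. Then there exist functions ε, δ : {1,…,n} → {1, −1} such that τ(b_i, w_j) = ε(i) · δ(j) · (−1)^{i+j} for all 1 ≤ i, j ≤ n, and moreover ∏_{i=1}^n ε(i) · ∏_{j=1}^n δ(j) equals sign_cons(N) · (−1)^{Σ_{i=1}^{2k} ⌊n_i/2⌋} if node 1 is black, and equals (−1)^n · sign_cons(N) · (−1)^{Σ_{i=1}^{2k} ⌊n_i/2⌋} if node 1 is white, where n_1 < ⋯ < n_{2k} are the couples of consecutive nodes of the same color. -/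
namespace DD

/-- The node set `{1, …, 2n}`. -/
def nodes (n : ℕ) : Finset ℕ := Finset.Icc 1 (2 * n)

/-- `ρ` is a pairing of `{1,…,2n}`: a fixed-point-free involution of the node set. -/
structure IsPairing (n : ℕ) (ρ : ℕ → ℕ) : Prop where
  maps : ∀ i ∈ nodes n, ρ i ∈ nodes n
  invol : ∀ i ∈ nodes n, ρ (ρ i) = i
  nofix : ∀ i ∈ nodes n, ρ i ≠ i

/-- Number of crossings of `ρ` among pairs of `ρ` contained in `A`:
a crossing is a pair of pairs `(a,c)`, `(b,d)` of `ρ` with `a < b < c < d`. -/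
def numCrossingsOn (A : Finset ℕ) (ρ : ℕ → ℕ) : ℕ :=
  ((A ×ˢ A).filter (fun p => p.1 < p.2 ∧ p.2 < ρ p.1 ∧ ρ p.1 < ρ p.2)).card

/-- Number of crossings of a pairing of `{1,…,2n}`. -/
def numCrossings (n : ℕ) (ρ : ℕ → ℕ) : ℕ := numCrossingsOn (nodes n) ρ

/-- A pairing is planar if it has no crossings. -/
def IsPlanar (n : ℕ) (ρ : ℕ → ℕ) : Prop := numCrossings n ρ = 0

/-- A coloring `c : ℕ → Bool` of the nodes: `true` = black, `false` = white.
A black-white pairing pairs each black node with a white node. -/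
def IsBW (n : ℕ) (c : ℕ → Bool) (ρ : ℕ → ℕ) : Prop :=
  ∀ i ∈ nodes n, c (ρ i) = !(c i)

/-- An odd-even pairing pairs each odd node with an even node. -/
def IsOE (n : ℕ) (ρ : ℕ → ℕ) : Prop :=
  ∀ i ∈ nodes n, ρ i % 2 ≠ i % 2

/-- The coloring has exactly `n` black (hence exactly `n` white) nodes. -/
def BalancedColoring (n : ℕ) (c : ℕ → Bool) : Prop :=
  ((nodes n).filter (fun i => c i = true)).card = n

/-- The black nodes. -/
def blacks (n : ℕ) (c : ℕ → Bool) : Finset ℕ := (nodes n).filter (fun i => c i = true)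

/-- The white nodes. -/
def whites (n : ℕ) (c : ℕ → Bool) : Finset ℕ := (nodes n).filter (fun i => c i = false)

/-- `sign_BW(ρ)`: the sign of the permutation sending `i` to the rank of `w_i = ρ(b_i)`
among the white nodes, computed as `(-1)` to the number of inversions, i.e. the number of
pairs of black nodes `b < b'` with `ρ b > ρ b'`. -/
def signBW (n : ℕ) (c : ℕ → Bool) (ρ : ℕ → ℕ) : ℤ :=
  (-1 : ℤ) ^ (((nodes n ×ˢ nodes n).filter
    (fun p => c p.1 = true ∧ c p.2 = true ∧ p.1 < p.2 ∧ ρ p.2 < ρ p.1)).card)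

/-- `sign_OE(π)`: the sign of the permutation sending `i` to `π(2i−1)/2`, computed as
`(-1)` to the number of pairs of odd nodes `a < b` with `π a > π b`. -/
def signOE (n : ℕ) (π : ℕ → ℕ) : ℤ :=
  (-1 : ℤ) ^ (((nodes n ×ˢ nodes n).filter
    (fun p => p.1 % 2 = 1 ∧ p.2 % 2 = 1 ∧ p.1 < p.2 ∧ π p.2 < π p.1)).card)

/-- `a_{b,w}`: the number of indices `i` with `min b w ≤ i < max b w` such that nodes `i`
and `i+1` have the same color. -/
def aCount (c : ℕ → Bool) (b w : ℕ) : ℕ :=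
  ((Finset.Ico (min b w) (max b w)).filter (fun i => c i = c (i + 1))).card

/-- `sign(b,w) = (−1)^{(|b−w| + a_{b,w} − 1)/2}` for a black node `b` and white node `w`. -/
def pairSign (c : ℕ → Bool) (b w : ℕ) : ℤ :=
  (-1 : ℤ) ^ ((max b w - min b w + aCount c b w - 1) / 2)

/-- Cyclic successor of node `m` in `{1,…,2n}`. -/
def nextNode (n m : ℕ) : ℕ := if m = 2 * n then 1 else m + 1

/-- Couples of consecutive nodes of the same color, cyclically: indices `m ∈ {1,…,2n}`
with nodes `m` and `m+1` (cyclically) of the same color. -/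
def couples (n : ℕ) (c : ℕ → Bool) : Finset ℕ :=
  (nodes n).filter (fun m => c m = c (nextNode n m))

/-- The value `φ(m)` for a couple `m`: writing `r` for the rank of `m` among couples of its
own color, `φ(m) = 2r` if `m` has the same color as node `1`, and `φ(m) = 2r − 1` otherwise. -/
def phiCouple (n : ℕ) (c : ℕ → Bool) (m : ℕ) : ℕ :=
  if c m = c 1 then 2 * ((couples n c).filter (fun m' => c m' = c m ∧ m' ≤ m)).card
  else 2 * ((couples n c).filter (fun m' => c m' = c m ∧ m' ≤ m)).card - 1

/-- `sign_cons(N)`: the sign of the one-line permutation `(φ(n₁),…,φ(n_{2k}))`, computed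
as `(-1)` to its number of inversions. -/
def signCons (n : ℕ) (c : ℕ → Bool) : ℤ :=
  (-1 : ℤ) ^ (((couples n c ×ˢ couples n c).filter
    (fun p => p.1 < p.2 ∧ phiCouple n c p.2 < phiCouple n c p.1)).card)

/-- The set `T` of nodes that are odd and white, or even and black. -/
def Tset (n : ℕ) (c : ℕ → Bool) : Finset ℕ :=
  (nodes n).filter (fun i => (i % 2 = 1 ∧ c i = false) ∨ (i % 2 = 0 ∧ c i = true))

/-- A subset is balanced if it contains equally many black and white nodes. -/
def BalancedSubset (c : ℕ → Bool) (S : Finset ℕ) : Prop :=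
  (S.filter (fun i => c i = true)).card = (S.filter (fun i => c i = false)).card

/-- `ρ` does not connect `S` to its complement: `ρ(S) = S`. -/
def Invariant (S : Finset ℕ) (ρ : ℕ → ℕ) : Prop := ∀ i ∈ S, ρ i ∈ S

/-- Reachability under the subgroup generated by the involutions `π` and `ρ`. -/
def compRel (n : ℕ) (π ρ : ℕ → ℕ) (a b : ℕ) : Prop :=
  Relation.ReflTransGen (fun u v => u ∈ nodes n ∧ (v = π u ∨ v = ρ u)) a b

open scoped Classical in
/-- The number of components (orbits) of `π ∪ ρ` on the node set. -/
noncomputable def numComponents (n : ℕ) (π ρ : ℕ → ℕ) : ℕ :=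
  ((nodes n).image (fun a => (nodes n).filter (fun b => compRel n π ρ a b))).card

/-!
Let `h(x) = x − #(descents before x)`, a descent being a step `i → i + 1` that leaves the colour
of node `1`. Between two nodes of different colours the colour changes alternate, which gives
`τ(b, w) = ± (−1)^(h(b) + h(w))` with a sign depending only on the colour of node `1`. So `τ`
factors with `ε(i) = (−1)^(h(b_i) + i)` and `δ(j) = ± (−1)^(h(w_j) + j)`, and
`∏ ε ∏ δ = (±1)^n (−1)^(Σ_x h(x))`. The parity of `Σ_x h(x)` is `n` plus the sum of the descent
positions. On the other side, `φ` interleaves the couples coloured like node `1` (even places)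
with the others (odd places), so its inversion number has the parity of the sum of their ranks
among the couples, i.e. of their positions; and `Σ ⌊n_i / 2⌋` telescopes along the cyclic
successor to `n` plus the sum of the nodes coloured like node `1`. Those nodes are exactly the
couples coloured like node `1` together with the descents.
-/

open Finset

/-- A descent is a step `i → i + 1` that leaves the colour of node `1`. -/
def descentCount (c : ℕ → Bool) (x : ℕ) : ℕ := #{i ∈ Ico 1 x | c i = c 1 ∧ c (i + 1) ≠ c 1}

def height (c : ℕ → Bool) (x : ℕ) : ℕ := x - descentCount c x

section Height

variable {c : ℕ → Bool}

lemma aCount_of_le {m M : ℕ} (h : m ≤ M) :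
    aCount c m M = #{i ∈ Ico m M | c i = c (i + 1)} := by
  rw [aCount, min_eq_left h, max_eq_right h]

lemma aCount_comm (m M : ℕ) : aCount c m M = aCount c M m := by
  rw [aCount, aCount, min_comm, max_comm]

lemma aCount_add_aCount {a m M : ℕ} (ham : a ≤ m) (hmM : m ≤ M) :
    aCount c a m + aCount c m M = aCount c a M := by
  rw [aCount_of_le ham, aCount_of_le hmM, aCount_of_le (ham.trans hmM),
    ← card_union_of_disjoint (disjoint_filter_filter (Ico_disjoint_Ico_consecutive a m M)),
    ← filter_union, Ico_union_Ico_eq_Ico ham hmM]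

lemma card_filter_Ico_succ_top (p : ℕ → Prop) [DecidablePred p] {a x : ℕ} (h : a ≤ x) :
    #{i ∈ Ico a (x + 1) | p i} = #{i ∈ Ico a x | p i} + if p x then 1 else 0 := by
  simp only [card_filter, sum_Ico_succ_top h]

/-- The colour changes inside `[1, x)` alternate between descents and returns to the colour
of node `1`, starting with a descent. -/
lemma two_mul_descentCount_add_aCount {x : ℕ} (hx : 1 ≤ x) :
    2 * descentCount c x + aCount c 1 x + (if c x = c 1 then 1 else 0) = x := by
  induction x, hx using Nat.le_induction with
  | base => simp [descentCount, aCount]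
  | succ x hx ih =>
    rw [descentCount, card_filter_Ico_succ_top _ hx, ← descentCount,
      ← aCount_add_aCount hx x.le_succ, aCount_of_le x.le_succ, Nat.Ico_succ_singleton,
      filter_singleton]
    revert ih
    cases c x <;> cases c (x + 1) <;> cases c 1 <;> simp <;> omega

lemma descentCount_le (x : ℕ) : descentCount c x ≤ x :=
  (card_filter_le _ _).trans (by simp)

lemma pairSign_comm (b w : ℕ) : pairSign c b w = pairSign c w b := by
  rw [pairSign, pairSign, aCount_comm, min_comm, max_comm]

lemma pairSign_of_lt {m M : ℕ} (hm : 1 ≤ m) (hmM : m < M) (hc : c m ≠ c M) :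
    pairSign c m M = (-1) ^ (height c m + height c M + if c M = c 1 then 1 else 0) := by
  have hkm := two_mul_descentCount_add_aCount (c := c) hm
  have hkM := two_mul_descentCount_add_aCount (c := c) (hm.trans hmM.le)
  have hsplit := aCount_add_aCount (c := c) hm hmM.le
  have he : (if c m = c 1 then 1 else 0) + (if c M = c 1 then 1 else 0) = 1 := by
    revert hc; cases c m <;> cases c M <;> cases c 1 <;> simp
  have hexp : (M - m + aCount c m M - 1) / 2 + 2 * (height c m + if c M = c 1 then 1 else 0)
      = height c m + height c M + if c M = c 1 then 1 else 0 := by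
    unfold height; omega
  rw [pairSign, min_eq_left hmM.le, max_eq_right hmM.le, ← hexp, pow_add, pow_mul, neg_one_sq,
    one_pow, mul_one]

def firstColorSign (c : ℕ → Bool) : ℤ := if c 1 = true then 1 else -1

lemma isUnit_firstColorSign (c : ℕ → Bool) : IsUnit (firstColorSign c) := by
  unfold firstColorSign
  split <;> simp

lemma ite_lt_mul_pairSign {b w : ℕ} (hb : 1 ≤ b) (hw : 1 ≤ w) (hcb : c b = true)
    (hcw : c w = false) :
    (if w < b then -1 else 1) * pairSign c b w
      = firstColorSign c * (-1) ^ (height c b + height c w) := by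
  rcases lt_or_gt_of_ne (show w ≠ b by rintro rfl; simp_all) with h | h
  · rw [if_pos h, pairSign_comm, pairSign_of_lt hw h (by simp [hcb, hcw]), hcb]
    cases h1 : c 1 <;> simp [firstColorSign, h1, pow_succ, add_comm (height c b)]
  · rw [if_neg h.not_gt, pairSign_of_lt hb h (by simp [hcb, hcw]), hcw]
    cases h1 : c 1 <;> simp [firstColorSign, h1, pow_succ]

end Height

section Shuffle

variable {α : Type*} [LinearOrder α]

lemma strictMonoOn_card_filter_le (s : Finset α) : StrictMonoOn (fun y => #{z ∈ s | z ≤ y}) s :=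
  fun a _ b hb hab => card_lt_card <| (ssubset_iff_of_subset fun z hz => by
      simp only [mem_filter] at hz ⊢; exact ⟨hz.1, hz.2.trans hab.le⟩).2
    ⟨b, mem_filter.2 ⟨hb, le_rfl⟩, fun h => hab.not_ge (mem_filter.1 h).2⟩

lemma card_filter_rank_le (Y : Finset α) {t : ℕ} (ht : t ≤ #Y) :
    #{y ∈ Y | #{z ∈ Y | z ≤ y} ≤ t} = t := by
  set r : α → ℕ := fun y => #{z ∈ Y | z ≤ y}
  have hmono : StrictMonoOn r Y := strictMonoOn_card_filter_le Y
  have himage : Y.image r = Icc 1 #Y := by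
    refine eq_of_subset_of_card_le (fun j hj => ?_) ?_
    · obtain ⟨y, hy, rfl⟩ := mem_image.1 hj
      exact mem_Icc.2 ⟨card_pos.2 ⟨y, mem_filter.2 ⟨hy, le_rfl⟩⟩, card_filter_le _ _⟩
    · rw [card_image_of_injOn hmono.injOn, Nat.card_Icc, Nat.add_sub_cancel]
  calc #{y ∈ Y | r y ≤ t}
      = #({y ∈ Y | r y ≤ t}.image r) :=
        (card_image_of_injOn (hmono.injOn.mono (filter_subset _ _))).symm
    _ = #(Icc 1 t) := by
        rw [← filter_image (p := (· ≤ t)), himage]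
        congr 1
        ext j
        simp only [mem_filter, mem_Icc]
        omega
    _ = t := by simp

theorem card_inversions_interleave {X Y : Finset α} (hXY : Disjoint X Y) (hcard : #X ≤ #Y)
    {φ : α → ℕ} (hφX : ∀ x ∈ X, φ x = 2 * #{z ∈ X | z ≤ x})
    (hφY : ∀ y ∈ Y, φ y = 2 * #{z ∈ Y | z ≤ y} - 1) :
    (#{p ∈ (X ∪ Y) ×ˢ (X ∪ Y) | p.1 < p.2 ∧ φ p.2 < φ p.1} : ZMod 2)
      = ∑ x ∈ X, (#{z ∈ X ∪ Y | z ≤ x} : ZMod 2) := by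
  set inv : α → α → ZMod 2 := fun a b => if a < b ∧ φ b < φ a then 1 else 0
  have hsorted : ∀ s : Finset α, StrictMonoOn φ s → ∀ a ∈ s, ∑ b ∈ s, inv a b = 0 :=
    fun s hφ a ha => sum_eq_zero fun b hb => if_neg fun h => (hφ ha hb h.1).not_gt h.2
  have hXX := hsorted X fun a ha b hb hab => by
    have := strictMonoOn_card_filter_le X ha hb hab
    simp only [hφX a ha, hφX b hb] at this ⊢
    omega
  have hYY := hsorted Y fun a ha b hb hab => by
    have := strictMonoOn_card_filter_le Y ha hb hab
    simp only [hφY a ha, hφY b hb] at this ⊢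
    omega
  -- Modulo 2, the contribution of a mixed pair no longer depends on which element is smaller.
  have hpair : ∀ x ∈ X, ∀ y ∈ Y, inv x y + inv y x
      = (if #{z ∈ Y | z ≤ y} ≤ #{z ∈ X | z ≤ x} then 1 else 0) + (if y ≤ x then 1 else 0) := by
    intro x hx y hy
    have hne : x ≠ y := fun h => disjoint_left.1 hXY hx (h ▸ hy)
    have hpos : 1 ≤ #{z ∈ Y | z ≤ y} := card_pos.2 ⟨y, mem_filter.2 ⟨hy, le_rfl⟩⟩
    simp only [inv, hφX x hx, hφY y hy]
    rcases lt_or_gt_of_ne hne with h | h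
    · simp only [h, h.not_gt, h.not_ge, true_and, false_and, if_false]
      split_ifs <;> first | decide | omega
    · simp only [h, h.le, h.not_gt, true_and, false_and, if_true, if_false]
      split_ifs <;> first | decide | omega
  rw [natCast_card_filter]
  change ∑ p ∈ (X ∪ Y) ×ˢ (X ∪ Y), inv p.1 p.2 = _
  simp only [sum_product', sum_union hXY, sum_add_distrib]
  rw [sum_eq_zero hXX, sum_eq_zero hYY, zero_add, add_zero, sum_comm (s := Y), ← sum_add_distrib]
  refine sum_congr rfl fun x hx => ?_
  rw [← sum_add_distrib, sum_congr rfl (hpair x hx), sum_add_distrib, sum_boole, sum_boole,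
    card_filter_rank_le Y ((card_filter_le _ _).trans hcard), filter_union,
    card_union_of_disjoint (disjoint_filter_filter hXY), Nat.cast_add]

end Shuffle

section Couples

variable {n : ℕ} {c : ℕ → Bool}

lemma mem_nodes {m : ℕ} : m ∈ nodes n ↔ 1 ≤ m ∧ m ≤ 2 * n := mem_Icc

lemma nextNode_of_lt {m : ℕ} (h : m < 2 * n) : nextNode n m = m + 1 := if_neg h.ne

def prevNode (n m : ℕ) : ℕ := if m = 1 then 2 * n else m - 1

lemma sum_nodes_nextNode {M : Type*} [AddCommMonoid M] (f : ℕ → ℕ → M) :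
    ∑ m ∈ nodes n, f m (nextNode n m) = ∑ m ∈ nodes n, f (prevNode n m) m := by
  have hprev : ∀ m ∈ nodes n, prevNode n (nextNode n m) = m := fun m hm => by
    rw [mem_nodes] at hm; unfold nextNode prevNode; split_ifs <;> omega
  refine sum_nbij' (nextNode n) (prevNode n) ?_ ?_ hprev ?_ (fun m hm => by rw [hprev m hm]) <;>
    intro m hm <;> rw [mem_nodes] at * <;> simp only [nextNode, prevNode] <;> split_ifs <;> omega

lemma card_filter_nodes_firstColor (hB : #(blacks n c) = n) (hW : #(whites n c) = n) :
    #{m ∈ nodes n | c m = c 1} = n := by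
  cases c 1
  exacts [hW, hB]

lemma card_filter_couples_firstColor_eq (hU : #{m ∈ nodes n | c m = c 1} = n) :
    #{m ∈ couples n c | c m = c 1} = #{m ∈ couples n c | c m ≠ c 1} := by
  set e : ℕ → ℤ := fun m => if c m = c 1 then 1 else 0
  have hcount : ∀ m, ((if c m = c (nextNode n m) ∧ c m = c 1 then 1 else 0) : ℤ)
      - (if c m = c (nextNode n m) ∧ c m ≠ c 1 then 1 else 0) = e m + e (nextNode n m) - 1 := by
    intro m
    simp only [e]
    cases c m <;> cases c (nextNode n m) <;> cases c 1 <;> simp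
  have he : ∑ m ∈ nodes n, e m = n := by simp only [e, sum_boole, hU]
  have he_next : ∑ m ∈ nodes n, e (nextNode n m) = n :=
    (sum_nodes_nextNode fun _ b => e b).trans he
  have hdiff : (#{m ∈ couples n c | c m = c 1} : ℤ) - #{m ∈ couples n c | c m ≠ c 1} = 0 := by
    rw [couples, filter_filter, filter_filter, natCast_card_filter, natCast_card_filter,
      ← sum_sub_distrib, sum_congr rfl fun m _ => hcount m, sum_sub_distrib, sum_add_distrib, he,
      he_next]
    simp [nodes]
    ring
  omega

lemma phiCouple_of_eq {m : ℕ} (hm : c m = c 1) :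
    phiCouple n c m = 2 * #{z ∈ {m ∈ couples n c | c m = c 1} | z ≤ m} := by
  rw [phiCouple, if_pos hm, filter_filter, hm]

lemma phiCouple_of_ne {m : ℕ} (hm : c m ≠ c 1) :
    phiCouple n c m = 2 * #{z ∈ {m ∈ couples n c | c m ≠ c 1} | z ≤ m} - 1 := by
  rw [phiCouple, if_neg hm, filter_filter]
  congr 3
  refine filter_congr fun z _ => ?_
  revert hm
  cases c z <;> cases c m <;> cases c 1 <;> simp

lemma card_couples_le_add_two_mul_descentCount {x : ℕ} (hx : x ∈ couples n c)
    (hx1 : c x = c 1) : #{m ∈ couples n c | m ≤ x} + 2 * descentCount c x = x := by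
  obtain ⟨hxn, hxx⟩ := mem_filter.1 hx
  have hx2n := (mem_nodes.1 hxn).2
  have hrank : {m ∈ couples n c | m ≤ x} = insert x {i ∈ Ico 1 x | c i = c (i + 1)} := by
    ext m
    simp only [couples, mem_filter, mem_insert, mem_Ico, mem_nodes]
    constructor
    · rintro ⟨⟨⟨h1, -⟩, hm⟩, hmx⟩
      rcases hmx.lt_or_eq with h | rfl
      · exact Or.inr ⟨⟨h1, h⟩, by rwa [nextNode_of_lt (by omega)] at hm⟩
      · exact Or.inl rfl
    · rintro (rfl | ⟨⟨h1, h⟩, hm⟩)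
      · exact ⟨⟨mem_nodes.1 hxn, hxx⟩, le_rfl⟩
      · exact ⟨⟨⟨h1, by omega⟩, by rwa [nextNode_of_lt (by omega)]⟩, h.le⟩
  have hkey := two_mul_descentCount_add_aCount (c := c) (mem_nodes.1 hxn).1
  rw [if_pos hx1, aCount_of_le (mem_nodes.1 hxn).1] at hkey
  rw [hrank, card_insert_of_notMem (by simp)]
  omega

lemma card_inversions_phiCouple_natCast (hU : #{m ∈ nodes n | c m = c 1} = n) :
    (#{p ∈ couples n c ×ˢ couples n c | p.1 < p.2 ∧ phiCouple n c p.2 < phiCouple n c p.1}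
      : ZMod 2) = ∑ x ∈ couples n c with c x = c 1, (x : ZMod 2) := by
  have hinv := card_inversions_interleave (disjoint_filter_filter_not _ _ _)
    (card_filter_couples_firstColor_eq hU).le (fun x hx => phiCouple_of_eq (mem_filter.1 hx).2)
    (fun y hy => phiCouple_of_ne (mem_filter.1 hy).2)
  rw [filter_union_filter_not_eq] at hinv
  rw [hinv]
  refine sum_congr rfl fun x hx => ?_
  obtain ⟨hxC, hx1⟩ := mem_filter.1 hx
  have h := congrArg (Nat.cast : ℕ → ZMod 2) (card_couples_le_add_two_mul_descentCount hxC hx1)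
  push_cast at h
  linear_combination h - (descentCount c x : ZMod 2) * CharTwo.two_eq_zero (R := ZMod 2)

end Couples

section Parity

variable {n : ℕ} {c : ℕ → Bool}

lemma sum_nodes_succ {M : Type*} [AddCommMonoid M] (f : ℕ → M) (n : ℕ) :
    ∑ x ∈ nodes (n + 1), f x = ∑ x ∈ nodes n, f x + f (2 * n + 1) + f (2 * n + 2) := by
  rw [nodes, nodes, show 2 * (n + 1) = 2 * n + 1 + 1 by ring, sum_Icc_succ_top (by omega),
    sum_Icc_succ_top (by omega)]

lemma sum_nodes_natCast (n : ℕ) : ∑ x ∈ nodes n, (x : ZMod 2) = n := by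
  induction n with
  | zero => rfl
  | succ n ih =>
    rw [sum_nodes_succ, ih]
    push_cast
    linear_combination (2 * (n : ZMod 2) + 1) * CharTwo.two_eq_zero (R := ZMod 2)

lemma sum_nodes_half_natCast (n : ℕ) : ∑ x ∈ nodes n, ((x / 2 : ℕ) : ZMod 2) = n := by
  induction n with
  | zero => rfl
  | succ n ih =>
    rw [sum_nodes_succ, ih, show (2 * n + 1) / 2 = n by omega,
      show (2 * n + 2) / 2 = n + 1 by omega]
    push_cast
    linear_combination (n : ZMod 2) * CharTwo.two_eq_zero (R := ZMod 2)

lemma sum_card_filter_Ico (p : ℕ → Prop) [DecidablePred p] (N : ℕ) :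
    ∑ x ∈ Icc 1 N, #{i ∈ Ico 1 x | p i} = ∑ i ∈ Ico 1 N with p i, (N - i) := by
  simp only [card_filter, sum_filter]
  rw [sum_comm' (t' := Ico 1 N) (s' := fun i => Ioc i N)
    (fun x i => by simp only [mem_Icc, mem_Ico, mem_Ioc]; omega)]
  refine sum_congr rfl fun i _ => ?_
  rw [sum_const, Nat.card_Ioc, smul_eq_mul]
  split_ifs <;> simp

lemma sum_height_natCast_eq_add_sum_descents :
    ∑ x ∈ nodes n, (height c x : ZMod 2)
      = n + ∑ i ∈ Ico 1 (2 * n) with c i = c 1 ∧ c (i + 1) ≠ c 1, (i : ZMod 2) := by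
  have hcast : ∀ x, (height c x : ZMod 2) = x + descentCount c x := fun x => by
    rw [height, Nat.cast_sub (descentCount_le x), CharTwo.sub_eq_add]
  simp only [hcast, sum_add_distrib, sum_nodes_natCast, ← Nat.cast_sum]
  simp only [nodes, descentCount]
  rw [sum_card_filter_Ico, Nat.cast_sum]
  refine congrArg _ (sum_congr rfl fun i hi => ?_)
  rw [Nat.cast_sub (mem_Ico.1 (mem_filter.1 hi).1).2.le]
  push_cast
  linear_combination ((n : ZMod 2) - i) * CharTwo.two_eq_zero (R := ZMod 2)

lemma sum_couples_half_natCast (hU : #{m ∈ nodes n | c m = c 1} = n) :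
    ∑ m ∈ couples n c, ((m / 2 : ℕ) : ZMod 2)
      = n + ∑ m ∈ nodes n with c m = c 1, (m : ZMod 2) := by
  rcases Nat.eq_zero_or_pos n with rfl | hn
  · rfl
  set e : ℕ → ZMod 2 := fun m => if c m = c 1 then 1 else 0
  set f : ℕ → ZMod 2 := fun m => ((m / 2 : ℕ) : ZMod 2)
  have hcouple : ∀ m, (if c m = c (nextNode n m) then 1 else 0 : ZMod 2)
      = 1 + e m + e (nextNode n m) := by
    intro m
    simp only [e]
    cases c m <;> cases c (nextNode n m) <;> cases c 1 <;> decide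
  have hprev : ∀ m ∈ nodes n,
      f m + f (prevNode n m) = m + 1 + if m = 1 then (n : ZMod 2) else 0 := by
    intro m hm
    rw [mem_nodes] at hm
    simp only [f, prevNode]
    split_ifs with h
    · subst h
      rw [Nat.mul_div_cancel_left _ two_pos]
      push_cast
      linear_combination -CharTwo.two_eq_zero (R := ZMod 2)
    · have h' := congrArg (Nat.cast : ℕ → ZMod 2) (show m / 2 + (m - 1) / 2 + 1 = m by omega)
      push_cast at h'
      linear_combination h' - CharTwo.two_eq_zero (R := ZMod 2)
  -- moving `e (nextNode n m)` to `e m` pairs `⌊m / 2⌋` with `⌊(m - 1) / 2⌋`, summing to `m - 1`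
  calc ∑ m ∈ couples n c, f m
      = ∑ m ∈ nodes n, (1 + e m + e (nextNode n m)) * f m := by
        rw [couples, sum_filter]
        exact sum_congr rfl fun m _ => by rw [← hcouple, ite_mul, one_mul, zero_mul]
    _ = ∑ m ∈ nodes n, f m + ∑ m ∈ nodes n, e m * (f m + f (prevNode n m)) := by
        simp only [add_mul, mul_add, one_mul, sum_add_distrib,
          sum_nodes_nextNode fun a b => e b * f a, add_assoc]
    _ = n + ∑ m ∈ nodes n with c m = c 1,
          ((m : ZMod 2) + 1 + if m = 1 then (n : ZMod 2) else 0) := by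
        rw [sum_nodes_half_natCast, sum_filter]
        exact congrArg _ (sum_congr rfl fun m hm => by rw [hprev m hm, ite_mul, one_mul, zero_mul])
    _ = n + ∑ m ∈ nodes n with c m = c 1, (m : ZMod 2) := by
        rw [sum_add_distrib, sum_add_distrib, sum_const, hU, sum_ite_eq', if_pos]
        · simp only [nsmul_eq_mul, mul_one]
          linear_combination (n : ZMod 2) * CharTwo.two_eq_zero (R := ZMod 2)
        · exact mem_filter.2 ⟨mem_nodes.2 ⟨le_rfl, by omega⟩, rfl⟩

lemma sum_filter_nodes_firstColor_eq {M : Type*} [AddCommMonoid M] (g : ℕ → M) :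
    ∑ m ∈ nodes n with c m = c 1, g m
      = ∑ m ∈ couples n c with c m = c 1, g m
        + ∑ i ∈ Ico 1 (2 * n) with c i = c 1 ∧ c (i + 1) ≠ c 1, g i := by
  rw [← sum_filter_add_sum_filter_not _ (fun m => c (nextNode n m) = c 1)]
  congr 2
  · rw [couples, filter_filter, filter_filter]
    refine filter_congr fun m _ => ?_
    constructor
    · rintro ⟨h1, h2⟩; exact ⟨h1.trans h2.symm, h1⟩
    · rintro ⟨h1, h2⟩; exact ⟨h2, h1 ▸ h2⟩
  · ext i
    simp only [mem_filter, mem_nodes, mem_Ico]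
    constructor
    · rintro ⟨⟨⟨h1, h2⟩, hi⟩, hnext⟩
      have hlt : i < 2 * n := lt_of_le_of_ne h2 fun h => hnext (by rw [nextNode, if_pos h])
      exact ⟨⟨h1, hlt⟩, hi, by rwa [nextNode_of_lt hlt] at hnext⟩
    · rintro ⟨⟨h1, hlt⟩, hi, hnext⟩
      exact ⟨⟨⟨h1, hlt.le⟩, hi⟩, by rwa [nextNode_of_lt hlt]⟩

lemma sum_height_natCast_eq_inversions_add (hU : #{m ∈ nodes n | c m = c 1} = n) :
    ∑ x ∈ nodes n, (height c x : ZMod 2)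
      = #{p ∈ couples n c ×ˢ couples n c | p.1 < p.2 ∧ phiCouple n c p.2 < phiCouple n c p.1}
        + ∑ m ∈ couples n c, ((m / 2 : ℕ) : ZMod 2) := by
  rw [sum_height_natCast_eq_add_sum_descents, card_inversions_phiCouple_natCast hU,
    sum_couples_half_natCast hU, sum_filter_nodes_firstColor_eq]
  linear_combination
    -(∑ m ∈ couples n c with c m = c 1, (m : ZMod 2)) * CharTwo.two_eq_zero (R := ZMod 2)

lemma neg_one_pow_eq_of_natCast_eq {a b : ℕ} (h : (a : ZMod 2) = b) : (-1 : ℤ) ^ a = (-1) ^ b :=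
  neg_one_pow_congr (by simp only [← ZMod.natCast_eq_zero_iff_even, h])

lemma neg_one_pow_sum_height (hU : #{m ∈ nodes n | c m = c 1} = n) :
    (-1 : ℤ) ^ (∑ x ∈ nodes n, height c x)
      = signCons n c * (-1) ^ (∑ m ∈ couples n c, m / 2) := by
  rw [signCons, ← pow_add]
  apply neg_one_pow_eq_of_natCast_eq
  push_cast
  exact sum_height_natCast_eq_inversions_add hU

end Parity

lemma prod_orderEmbOfFin {α M : Type*} [LinearOrder α] [CommMonoid M] (s : Finset α) {k : ℕ}
    (h : #s = k) (f : α → M) : ∏ i, f (s.orderEmbOfFin h i) = ∏ x ∈ s, f x := by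
  conv_rhs => rw [← s.image_orderEmbOfFin_univ h]
  rw [prod_image (s.orderEmbOfFin h).injective.injOn]

lemma prod_blacks_mul_prod_whites {M : Type*} [CommMonoid M] (n : ℕ) (c : ℕ → Bool)
    (f : ℕ → M) : (∏ x ∈ blacks n c, f x) * ∏ x ∈ whites n c, f x = ∏ x ∈ nodes n, f x := by
  rw [blacks, whites, ← prod_filter_mul_prod_filter_not (nodes n) (fun i => c i = true)]
  simp only [Bool.not_eq_true]

lemma prod_row_signs_mul_prod_column_signs (n : ℕ) (c : ℕ → Bool) (hB : #(blacks n c) = n)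
    (hW : #(whites n c) = n) (σ : ℤ) :
    (∏ i, (-1) ^ height c ((blacks n c).orderEmbOfFin hB i) * (-1) ^ (i : ℕ))
      * ∏ j, σ * (-1) ^ height c ((whites n c).orderEmbOfFin hW j) * (-1) ^ (j : ℕ)
      = σ ^ n * (-1) ^ (∑ x ∈ nodes n, height c x) := by
  have hP : (∏ i : Fin n, (-1 : ℤ) ^ (i : ℕ)) * ∏ i : Fin n, (-1 : ℤ) ^ (i : ℕ) = 1 := by
    rw [← prod_mul_distrib]
    exact prod_eq_one fun i _ => pow_mul_pow_eq_one _ (by norm_num)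
  simp only [prod_mul_distrib, prod_const, card_univ, Fintype.card_fin,
    prod_orderEmbOfFin _ _ fun x => (-1 : ℤ) ^ height c x]
  calc _ = σ ^ n * ((∏ x ∈ blacks n c, (-1) ^ height c x) * ∏ x ∈ whites n c, (-1) ^ height c x)
        * ((∏ i : Fin n, (-1 : ℤ) ^ (i : ℕ)) * ∏ i : Fin n, (-1 : ℤ) ^ (i : ℕ)) := by ring
    _ = σ ^ n * (-1) ^ (∑ x ∈ nodes n, height c x) := by
      rw [prod_blacks_mul_prod_whites, hP, prod_pow_eq_pow_sum, mul_one]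

/-- Lemma 3.0.6: writing `τ(b,w) = (−1)^{[b>w]} sign(b,w)`, and
`b₁ < ⋯ < bₙ`, `w₁ < ⋯ < wₙ` for the black and white nodes, there are row and column
signs `ε, δ` making `τ(b_i, w_j) = ε(i) δ(j) (−1)^{i+j}`, and the product of all signs is
`sign_cons(N) · (−1)^{Σ ⌊nᵢ/2⌋}` if node 1 is black, times an extra `(−1)^n` if node 1 is
white. -/
theorem statement17 (n : ℕ) (c : ℕ → Bool)
    (hB : (blacks n c).card = n) (hW : (whites n c).card = n) :
    ∃ ε δ : Fin n → ℤ,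
      (∀ i, ε i = 1 ∨ ε i = -1) ∧ (∀ j, δ j = 1 ∨ δ j = -1) ∧
      (∀ i j : Fin n,
        (if (whites n c).orderEmbOfFin hW j < (blacks n c).orderEmbOfFin hB i
            then (-1 : ℤ) else 1)
          * pairSign c ((blacks n c).orderEmbOfFin hB i) ((whites n c).orderEmbOfFin hW j)
          = ε i * δ j * (-1 : ℤ) ^ ((i : ℕ) + (j : ℕ))) ∧
      (∏ i, ε i) * (∏ j, δ j)
        = (if c 1 = true
            then signCons n c * (-1 : ℤ) ^ (∑ m ∈ couples n c, m / 2)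
            else (-1 : ℤ) ^ n * signCons n c * (-1 : ℤ) ^ (∑ m ∈ couples n c, m / 2)) := by
  set b := (blacks n c).orderEmbOfFin hB
  set w := (whites n c).orderEmbOfFin hW
  have hb : ∀ i, 1 ≤ b i ∧ c (b i) = true := fun i =>
    (mem_filter.1 ((blacks n c).orderEmbOfFin_mem hB i)).imp_left (mem_nodes.1 · |>.1)
  have hw : ∀ j, 1 ≤ w j ∧ c (w j) = false := fun j =>
    (mem_filter.1 ((whites n c).orderEmbOfFin_mem hW j)).imp_left (mem_nodes.1 · |>.1)
  have hsq (k : ℕ) : (-1 : ℤ) ^ k * (-1) ^ k = 1 := pow_mul_pow_eq_one k (by norm_num)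
  have hunit : IsUnit (-1 : ℤ) := isUnit_one.neg
  refine ⟨fun i => (-1) ^ height c (b i) * (-1) ^ (i : ℕ),
    fun j => firstColorSign c * (-1) ^ height c (w j) * (-1) ^ (j : ℕ),
    fun i => Int.isUnit_iff.1 ((hunit.pow _).mul (hunit.pow _)),
    fun j => Int.isUnit_iff.1 (((isUnit_firstColorSign c).mul (hunit.pow _)).mul (hunit.pow _)),
    fun i j => ?_, ?_⟩
  · rw [ite_lt_mul_pairSign (hb i).1 (hw j).1 (hb i).2 (hw j).2]
    linear_combination -(firstColorSign c * (-1) ^ (height c (b i) + height c (w j)))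
      * (hsq i + (-1) ^ (i : ℕ) * (-1) ^ (i : ℕ) * hsq j)
  · rw [prod_row_signs_mul_prod_column_signs n c hB hW,
      neg_one_pow_sum_height (card_filter_nodes_firstColor hB hW)]
    cases h : c 1 <;> simp [firstColorSign, h, mul_assoc]

end DD
end

section
/- Let π be a planar odd-even pairing of N = {1,…,2n}. Then the number of inversions of π equals the number of nestings of π. -/
namespace DD

/-
A transversal of the arcs of a pairing picks one endpoint of every arc; both the odd nodes of an
odd-even pairing and the openers `x < π x` are transversals, and the nestings are exactly the
inversions among the openers. So it suffices that the number of inversions among the nodes of a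
transversal does not depend on the transversal. Call two nodes on different arcs inverted when `π`
reverses their order. In a planar pairing two arcs are either disjoint, and then no choice of
endpoints is inverted, or nested, and then every choice is. Hence being inverted depends only on
the arcs, and counting ordered inverted pairs of a transversal, which is twice its number of
inversions, gives the same result for every transversal.
-/

def inversions (π : ℕ → ℕ) (s : Finset ℕ) : Finset (ℕ × ℕ) :=
  (s ×ˢ s).filter fun p => p.1 < p.2 ∧ π p.2 < π p.1

def Inverts (π : ℕ → ℕ) (a b : ℕ) : Prop :=
  (a < b ∧ π b < π a) ∨ (b < a ∧ π a < π b)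

instance (π : ℕ → ℕ) : DecidableRel (Inverts π) :=
  fun a b => inferInstanceAs (Decidable ((a < b ∧ π b < π a) ∨ (b < a ∧ π a < π b)))

def IsArcTransversal (n : ℕ) (π : ℕ → ℕ) (s : Finset ℕ) : Prop :=
  s ⊆ nodes n ∧ ∀ x ∈ nodes n, π x ∈ s ↔ x ∉ s

theorem card_filter_or_swap {α : Type*} [DecidableEq α] (s : Finset α) (R : α → α → Prop)
    [DecidableRel R] (hR : ∀ a b, R a b → ¬ R b a) :
    ((s ×ˢ s).filter fun p => R p.1 p.2 ∨ R p.2 p.1).card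
      = 2 * ((s ×ˢ s).filter fun p => R p.1 p.2).card := by
  have hswap : ((s ×ˢ s).filter fun p => R p.2 p.1).card
      = ((s ×ˢ s).filter fun p => R p.1 p.2).card :=
    Finset.card_equiv (Equiv.prodComm α α) fun p => by simp [and_comm]
  rw [Finset.filter_or, Finset.card_union_of_disjoint, hswap, two_mul]
  exact Finset.disjoint_filter.2 fun p _ h => hR _ _ h

theorem card_filter_inverts_eq_two_mul (π : ℕ → ℕ) (s : Finset ℕ) :
    ((s ×ˢ s).filter fun p => Inverts π p.1 p.2).card = 2 * (inversions π s).card :=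
  card_filter_or_swap s (fun a b => a < b ∧ π b < π a) fun _ _ h h' => by omega

def arcRep (π : ℕ → ℕ) (s : Finset ℕ) (x : ℕ) : ℕ :=
  if x ∈ s then x else π x

section Pairing

variable {n : ℕ} {π : ℕ → ℕ}

theorem IsPlanar.not_crossing (hpl : IsPlanar n π) {a b : ℕ} (ha : a ∈ nodes n)
    (hb : b ∈ nodes n) : ¬ (a < b ∧ b < π a ∧ π a < π b) := fun h =>
  Finset.card_ne_zero_of_mem (a := (a, b))
    (Finset.mem_filter.2 ⟨Finset.mem_product.2 ⟨ha, hb⟩, h⟩) hpl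

theorem IsPairing.apply_eq_iff_eq_apply (hπ : IsPairing n π) {a b : ℕ} (ha : a ∈ nodes n)
    (hb : b ∈ nodes n) : π a = b ↔ a = π b :=
  ⟨fun h => by rw [← h, hπ.invol a ha], fun h => by rw [h, hπ.invol b hb]⟩

theorem IsPairing.injOn (hπ : IsPairing n π) : Set.InjOn π (nodes n) := fun _ ha b hb h =>
  (hπ.apply_eq_iff_eq_apply ha (hπ.maps b hb)).1 h |>.trans (hπ.invol b hb)

theorem Inverts.irrefl {a : ℕ} : ¬ Inverts π a a := by
  unfold Inverts; omega

theorem Inverts.comm {a b : ℕ} : Inverts π a b ↔ Inverts π b a := by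
  unfold Inverts; tauto

theorem inverts_apply_left_iff (hπ : IsPairing n π) (hpl : IsPlanar n π) {a b : ℕ}
    (ha : a ∈ nodes n) (hb : b ∈ nodes n) (hba : b ≠ a) (hbπa : b ≠ π a) :
    Inverts π (π a) b ↔ Inverts π a b := by
  have haa := hπ.invol a ha
  wlog hlt : a < π a generalizing a with H
  · have := H (hπ.maps a ha) hbπa (by rwa [haa]) (hπ.invol _ (hπ.maps a ha))
      (by have := hπ.nofix a ha; omega)
    rwa [haa, iff_comm] at this
  have hπb := hπ.maps b hb
  have hbb := hπ.invol b hb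
  have hπba : π b ≠ π a := fun h => hba (hπ.injOn hb ha h)
  have hπbπa : π b ≠ a := fun h => hbπa ((hπ.apply_eq_iff_eq_apply hb ha).1 h)
  unfold Inverts
  rw [haa]
  rcases (hπ.nofix b hb).lt_or_gt with hb' | hb'
  · have h1 := hpl.not_crossing ha hπb
    have h2 := hpl.not_crossing hπb ha
    rw [hbb] at h1 h2
    omega
  · have h1 := hpl.not_crossing ha hb
    have h2 := hpl.not_crossing hb ha
    omega

theorem inverts_congr (hπ : IsPairing n π) (hpl : IsPlanar n π) {a a' b b' : ℕ}
    (ha : a ∈ nodes n) (hb : b ∈ nodes n) (hba : b ≠ a) (hbπa : b ≠ π a)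
    (ha' : a' = a ∨ a' = π a) (hb' : b' = b ∨ b' = π b) :
    Inverts π a' b' ↔ Inverts π a b := by
  have hπba : π b ≠ π a := fun h => hba (hπ.injOn hb ha h)
  have hπbπa : π b ≠ a := fun h => hbπa ((hπ.apply_eq_iff_eq_apply hb ha).1 h)
  have hleft : ∀ y, y = b ∨ y = π b → (Inverts π a' y ↔ Inverts π a y) := by
    rintro y (rfl | rfl) <;> rcases ha' with rfl | rfl
    · rfl
    · exact inverts_apply_left_iff hπ hpl ha hb hba hbπa
    · rfl
    · exact inverts_apply_left_iff hπ hpl ha (hπ.maps b hb) hπbπa hπba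
  rw [hleft b' hb']
  rcases hb' with rfl | rfl
  · rfl
  · rw [Inverts.comm, inverts_apply_left_iff hπ hpl hb ha hba.symm hπbπa.symm, Inverts.comm]

theorem arcRep_eq_or (s : Finset ℕ) (x : ℕ) : arcRep π s x = x ∨ arcRep π s x = π x := by
  unfold arcRep; split_ifs <;> simp

theorem IsArcTransversal.arcRep_mem {s : Finset ℕ} (hs : IsArcTransversal n π s) {x : ℕ}
    (hx : x ∈ nodes n) : arcRep π s x ∈ s := by
  unfold arcRep; split_ifs with h
  · exact h
  · exact (hs.2 x hx).2 h

theorem IsArcTransversal.arcRep_arcRep (hπ : IsPairing n π) {s : Finset ℕ}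
    (hs : IsArcTransversal n π s) (t : Finset ℕ) {x : ℕ} (hx : x ∈ s) :
    arcRep π s (arcRep π t x) = x := by
  have hxn := hs.1 hx
  by_cases hxt : x ∈ t
  · simp [arcRep, hxt, hx]
  · have hπx : π x ∉ s := fun h => (hs.2 x hxn).1 h hx
    simp [arcRep, hxt, hπx, hπ.invol x hxn]

theorem IsArcTransversal.inverts_arcRep_iff (hπ : IsPairing n π) (hpl : IsPlanar n π)
    {s : Finset ℕ} (hs : IsArcTransversal n π s) (t : Finset ℕ) {a b : ℕ} (ha : a ∈ s)
    (hb : b ∈ s) : Inverts π (arcRep π t a) (arcRep π t b) ↔ Inverts π a b := by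
  obtain rfl | hba := eq_or_ne b a
  · simp only [Inverts.irrefl]
  have hbπa : b ≠ π a := fun h => (hs.2 a (hs.1 ha)).1 (h ▸ hb) ha
  exact inverts_congr hπ hpl (hs.1 ha) (hs.1 hb) hba hbπa (arcRep_eq_or t a) (arcRep_eq_or t b)

theorem IsArcTransversal.map_arcRep_mem (hπ : IsPairing n π) (hpl : IsPlanar n π)
    {s t : Finset ℕ} (hs : IsArcTransversal n π s) (ht : IsArcTransversal n π t) {p : ℕ × ℕ}
    (hp : p ∈ (s ×ˢ s).filter fun p => Inverts π p.1 p.2) :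
    Prod.map (arcRep π t) (arcRep π t) p ∈ (t ×ˢ t).filter fun p => Inverts π p.1 p.2 := by
  simp only [Finset.mem_filter, Finset.mem_product] at hp ⊢
  obtain ⟨⟨ha, hb⟩, hinv⟩ := hp
  exact ⟨⟨ht.arcRep_mem (hs.1 ha), ht.arcRep_mem (hs.1 hb)⟩,
    (hs.inverts_arcRep_iff hπ hpl t ha hb).2 hinv⟩

theorem IsArcTransversal.map_arcRep_map_arcRep (hπ : IsPairing n π) {s : Finset ℕ}
    (hs : IsArcTransversal n π s) (t : Finset ℕ) {p : ℕ × ℕ} (hp : p ∈ s ×ˢ s) :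
    Prod.map (arcRep π s) (arcRep π s) (Prod.map (arcRep π t) (arcRep π t) p) = p := by
  rw [Finset.mem_product] at hp
  simp only [Prod.map, hs.arcRep_arcRep hπ t hp.1, hs.arcRep_arcRep hπ t hp.2]

theorem card_filter_inverts_eq (hπ : IsPairing n π) (hpl : IsPlanar n π) {s t : Finset ℕ}
    (hs : IsArcTransversal n π s) (ht : IsArcTransversal n π t) :
    ((s ×ˢ s).filter fun p => Inverts π p.1 p.2).card
      = ((t ×ˢ t).filter fun p => Inverts π p.1 p.2).card :=
  Finset.card_nbij' (Prod.map (arcRep π t) (arcRep π t)) (Prod.map (arcRep π s) (arcRep π s))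
    (fun _ hp => hs.map_arcRep_mem hπ hpl ht hp) (fun _ hp => ht.map_arcRep_mem hπ hpl hs hp)
    (fun _ hp => hs.map_arcRep_map_arcRep hπ t (Finset.mem_filter.1 hp).1)
    (fun _ hp => ht.map_arcRep_map_arcRep hπ s (Finset.mem_filter.1 hp).1)

theorem card_inversions_eq (hπ : IsPairing n π) (hpl : IsPlanar n π) {s t : Finset ℕ}
    (hs : IsArcTransversal n π s) (ht : IsArcTransversal n π t) :
    (inversions π s).card = (inversions π t).card := by
  have := card_filter_inverts_eq hπ hpl hs ht
  rw [card_filter_inverts_eq_two_mul, card_filter_inverts_eq_two_mul] at this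
  omega

end Pairing

theorem inversions_filter (π : ℕ → ℕ) (s : Finset ℕ) (P : ℕ → Prop) [DecidablePred P] :
    inversions π (s.filter P)
      = (s ×ˢ s).filter fun p => P p.1 ∧ P p.2 ∧ p.1 < p.2 ∧ π p.2 < π p.1 := by
  ext
  simp only [inversions, Finset.mem_filter, Finset.mem_product]
  tauto

/-- for a planar odd-even pairing `π`, the number of inversions equals
the number of nestings. -/
theorem statement19 (n : ℕ) (π : ℕ → ℕ) (hπ : IsPairing n π)
    (hoe : IsOE n π) (hpl : IsPlanar n π) :
    ((nodes n ×ˢ nodes n).filter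
        (fun p => p.1 % 2 = 1 ∧ p.2 % 2 = 1 ∧ p.1 < p.2 ∧ π p.2 < π p.1)).card
      = ((nodes n ×ˢ nodes n).filter
        (fun p => p.1 < π p.1 ∧ p.2 < π p.2 ∧ p.1 < p.2 ∧ π p.2 < π p.1)).card := by
  have hodd : IsArcTransversal n π ((nodes n).filter (· % 2 = 1)) := by
    refine ⟨Finset.filter_subset _ _, fun x hx => ?_⟩
    simp only [Finset.mem_filter, hx, hπ.maps x hx, true_and]
    have := hoe x hx
    omega
  have hopen : IsArcTransversal n π ((nodes n).filter fun x => x < π x) := by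
    refine ⟨Finset.filter_subset _ _, fun x hx => ?_⟩
    simp only [Finset.mem_filter, hx, hπ.maps x hx, hπ.invol x hx, true_and]
    have := hπ.nofix x hx
    omega
  have := card_inversions_eq hπ hpl hodd hopen
  rwa [inversions_filter, inversions_filter] at this

end DD
end
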